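/- arXiv:1804.02194 — 3 statements merged into one kernel-verified Lean document; each statement's English description precedes it below -/
import Mathlib

section
/- Let X be a Banach sequence space over a countably infinite index set I in which the canonical unit vectors (e_i)_{i∈I} form an OP-basis, let φ : I → I be an injective map, and for each 1 ≤ l ≤ N (N ≥ 2) let T_l = T_{b^{(l)},φ} : X → X be a weighted pseudo-shift generated by φ with weight sequence b^{(l)} = (b_i^{(l)})_{i∈I} of nonzero scalars. Then for any integers 1 ≤ r₁ < r₂ < ⋯ < r_N the following are equivalent: (1) T₁^{r₁}, T₂^{r₂}, …, T_N^{r_N} are densely d-hypercyclic; (2) (α) the mapping φ has no periodic points, and (β) there exists a strictly increasing sequence (n_k)_{k≥1} of positive integers such that for every i ∈ I: (H1) for each 1 ≤ l ≤ N, ‖(∏_{v=0}^{r_l n_k−1} b^{(l)}_{φ^v(i)})^{−1} e_{φ^{r_l n_k}(i)}‖ → 0 and ‖(∏_{v=1}^{r_l n_k} b^{(l)}_{ψ^v(i)}) e_{ψ^{r_l n_k}(i)}‖ → 0 as k → ∞; and (H2) for all 1 ≤ s < l ≤ N, ‖(∏_{v=0}^{r_s n_k−1} b^{(s)}_{φ^v(i)})^{−1}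 (∏_{v=1}^{r_l n_k} b^{(l)}_{ψ^v(φ^{r_s n_k}(i))}) e_{ψ^{(r_l−r_s) n_k}(i)}‖ → 0 and ‖(∏_{v=0}^{r_l n_k−1} b^{(l)}_{φ^v(i)})^{−1} (∏_{v=1}^{r_s n_k} b^{(s)}_{ψ^v(φ^{r_l n_k}(i))}) e_{φ^{(r_l−r_s) n_k}(i)}‖ → 0 as k → ∞. -/
open Filter Topology
open scoped Classical

/-- The vector `(∏_{v=1}^{n} b_{ψ^v(i)}) • e_{ψ^n(i)}`, where `ψ` is the partial inverse of the
injective map `φ`, with the convention that the whole term is `0` when `ψ^n(i)` is undefined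
(i.e. when `i ∉ φ^n(I)`). -/
noncomputable def backVec {I X : Type*} [AddCommGroup X] [Module ℂ X]
    (φ : I → I) (b : I → ℂ) (e : I → X) (n : ℕ) (i : I) : X :=
  if h : ∃ j, φ^[n] j = i then
    (∏ v ∈ Finset.range n, b (φ^[v] (Classical.choose h))) • e (Classical.choose h)
  else 0

lemma backVec_eq {I X : Type*} [AddCommGroup X] [Module ℂ X]
    {φ : I → I} (hφ : Function.Injective φ) (b : I → ℂ) (e : I → X) (n : ℕ) (j : I) :
    backVec φ b e n (φ^[n] j) = (∏ v ∈ Finset.range n, b (φ^[v] j)) • e j := by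
  have h : ∃ j', φ^[n] j' = φ^[n] j := ⟨j, rfl⟩
  have hj : Classical.choose h = j := hφ.iterate n (Classical.choose_spec h)
  rw [backVec, dif_pos h, hj]

lemma backVec_zero {I X : Type*} [AddCommGroup X] [Module ℂ X]
    (φ : I → I) (b : I → ℂ) (e : I → X) (n : ℕ) (i : I)
    (h : ¬ ∃ j, φ^[n] j = i) : backVec φ b e n i = 0 := by
  rw [backVec, dif_neg h]

section main
variable {X : Type*} [NormedAddCommGroup X] [NormedSpace ℂ X]
    {I : Type*}
    (J : X →L[ℂ] (I → ℂ))
    (e : I → X)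
    (φ : I → I)
    (w : I → ℂ)
    (T : X →L[ℂ] X)

lemma coord_pow (hT : ∀ x i, J (T x) i = w i * J x (φ i)) (m : ℕ) (x : X) (i : I) :
    J ((T ^ m) x) i = (∏ v ∈ Finset.range m, w (φ^[v] i)) * J x (φ^[m] i) := by
  induction m generalizing x with
  | zero => simp
  | succ m ih =>
    have : (T ^ (m + 1)) x = (T ^ m) (T x) := by
      rw [pow_succ]; rfl
    rw [this, ih, hT, Finset.prod_range_succ, Function.iterate_succ_apply']
    ring

lemma pow_apply_e (hJ : Function.Injective J)
    (he : ∀ i j : I, J (e i) j = if j = i then 1 else 0)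
    (hφ : Function.Injective φ)
    (hT : ∀ x i, J (T x) i = w i * J x (φ i)) (m : ℕ) (i : I) :
    (T ^ m) (e i) = backVec φ w e m i := by
  apply hJ
  funext p
  rw [coord_pow J φ w T hT, he]
  by_cases h : ∃ j, φ^[m] j = i
  · obtain ⟨j, rfl⟩ := h
    rw [backVec_eq hφ]
    rw [map_smul]
    simp only [Pi.smul_apply, smul_eq_mul, he]
    by_cases hp : p = j
    · subst hp; simp
    · have : ¬ φ^[m] p = φ^[m] j := fun hc => hp (hφ.iterate m hc)
      simp [hp, if_neg this]
  · rw [backVec_zero _ _ _ _ _ h]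
    have : ¬ φ^[m] p = i := fun hc => h ⟨p, hc⟩
    simp [if_neg this]

end main

lemma left_of_right
    {X : Type*} [NormedAddCommGroup X] [NormedSpace ℂ X] [CompleteSpace X]
    [TopologicalSpace.SeparableSpace X]
    {I : Type*}
    (J : X →L[ℂ] (I → ℂ)) (hJ : Function.Injective J)
    (e : I → X) (he : ∀ i j : I, J (e i) j = if j = i then 1 else 0)
    (hdense : Dense (Submodule.span ℂ (Set.range e) : Set X))
    (φ : I → I) (hφ : Function.Injective φ)
    {N : ℕ} (r : Fin N → ℕ)
    (b : Fin N → I → ℂ) (hb : ∀ l i, b l i ≠ 0)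
    (T : Fin N → X →L[ℂ] X)
    (hT : ∀ (l : Fin N) (x : X) (i : I), J (T l x) i = b l i * J x (φ i))
    (n : ℕ → ℕ)
    (H1a : ∀ (i : I) (l : Fin N), Tendsto (fun k =>
      ‖(∏ v ∈ Finset.range (r l * n k), b l (φ^[v] i))⁻¹ • e (φ^[r l * n k] i)‖) atTop (𝓝 0))
    (H1b : ∀ (i : I) (l : Fin N), Tendsto (fun k =>
      ‖backVec φ (b l) e (r l * n k) i‖) atTop (𝓝 0))
    (H2a : ∀ (i : I) (s l : Fin N), s < l → Tendsto (fun k =>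
      ‖(∏ v ∈ Finset.range (r s * n k), b s (φ^[v] i))⁻¹ •
        backVec φ (b l) e (r l * n k) (φ^[r s * n k] i)‖) atTop (𝓝 0))
    (H2b : ∀ (i : I) (s l : Fin N), s < l → Tendsto (fun k =>
      ‖(∏ v ∈ Finset.range (r l * n k), b l (φ^[v] i))⁻¹ •
        backVec φ (b s) e (r s * n k) (φ^[r l * n k] i)‖) atTop (𝓝 0)) :
    Dense {x : X | Dense (Set.range fun m : ℕ => fun l : Fin N => ((T l) ^ (r l * m)) x)} := by
  -- step 1 : T_l ^ (r l * n k) tends to zero on the span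
  have hA : ∀ (l : Fin N) (u : X), u ∈ Submodule.span ℂ (Set.range e) →
      Tendsto (fun k => ((T l) ^ (r l * n k)) u) atTop (𝓝 0) := by
    intro l u hu
    induction hu using Submodule.span_induction with
    | mem x hx =>
      obtain ⟨i, rfl⟩ := hx
      have heq : ∀ k, ((T l) ^ (r l * n k)) (e i) = backVec φ (b l) e (r l * n k) i :=
        fun k => pow_apply_e J e φ (b l) (T l) hJ he hφ (hT l) _ i
      simp only [heq]
      exact tendsto_zero_iff_norm_tendsto_zero.2 (H1b i l)
    | zero => simp only [map_zero]; exact tendsto_const_nhds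
    | add x y hx hy ihx ihy =>
      simp only [map_add]
      simpa using ihx.add ihy
    | smul a x hx ih =>
      simp only [map_smul]
      simpa using ih.const_smul a
  -- step 2 : right-inverse-type sequences on the span
  have hq : ∀ (l : Fin N) (v : X), v ∈ Submodule.span ℂ (Set.range e) →
      ∃ W : ℕ → X, Tendsto W atTop (𝓝 0) ∧
        Tendsto (fun k => ((T l) ^ (r l * n k)) (W k)) atTop (𝓝 v) ∧
        (∀ s : Fin N, s ≠ l → Tendsto (fun k => ((T s) ^ (r s * n k)) (W k)) atTop (𝓝 0)) := by
    intro l v hv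
    induction hv using Submodule.span_induction with
    | mem x hx =>
      obtain ⟨i, rfl⟩ := hx
      refine ⟨fun k => (∏ v ∈ Finset.range (r l * n k), b l (φ^[v] i))⁻¹ •
        e (φ^[r l * n k] i), ?_, ?_, ?_⟩
      · exact tendsto_zero_iff_norm_tendsto_zero.2 (H1a i l)
      · have heq : ∀ k, ((T l) ^ (r l * n k))
            ((∏ v ∈ Finset.range (r l * n k), b l (φ^[v] i))⁻¹ • e (φ^[r l * n k] i)) = e i := by
          intro k
          rw [map_smul, pow_apply_e J e φ (b l) (T l) hJ he hφ (hT l), backVec_eq hφ,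
            smul_smul, inv_mul_cancel₀, one_smul]
          exact Finset.prod_ne_zero_iff.2 fun v _ => hb l _
        simp only [heq]
        exact tendsto_const_nhds
      · intro s hs
        have heq : ∀ k, ((T s) ^ (r s * n k))
            ((∏ v ∈ Finset.range (r l * n k), b l (φ^[v] i))⁻¹ • e (φ^[r l * n k] i)) =
            (∏ v ∈ Finset.range (r l * n k), b l (φ^[v] i))⁻¹ •
              backVec φ (b s) e (r s * n k) (φ^[r l * n k] i) := by
          intro k
          rw [map_smul, pow_apply_e J e φ (b s) (T s) hJ he hφ (hT s)]
        simp only [heq]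
        rcases hs.lt_or_gt with h | h
        · exact tendsto_zero_iff_norm_tendsto_zero.2 (H2b i s l h)
        · exact tendsto_zero_iff_norm_tendsto_zero.2 (H2a i l s h)
    | zero =>
      exact ⟨fun _ => 0, tendsto_const_nhds, by simp only [map_zero]; exact tendsto_const_nhds,
        fun s _ => by simp only [map_zero]; exact tendsto_const_nhds⟩
    | add x y hx hy ihx ihy =>
      obtain ⟨W1, hW1, hW1', hW1''⟩ := ihx
      obtain ⟨W2, hW2, hW2', hW2''⟩ := ihy
      refine ⟨fun k => W1 k + W2 k, by simpa using hW1.add hW2, ?_, ?_⟩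
      · simp only [map_add]; exact hW1'.add hW2'
      · intro s hs
        simp only [map_add]
        simpa using (hW1'' s hs).add (hW2'' s hs)
    | smul a x hx ih =>
      obtain ⟨W1, hW1, hW1', hW1''⟩ := ih
      refine ⟨fun k => a • W1 k, by simpa using hW1.const_smul a, ?_, ?_⟩
      · simp only [map_smul]; exact hW1'.const_smul a
      · intro s hs
        simp only [map_smul]
        simpa using (hW1'' s hs).const_smul a
  -- Baire category argument
  obtain ⟨𝔅, hBc, hBne, hbasis⟩ := TopologicalSpace.exists_countable_basis (Fin N → X)
  have hUopen : ∀ B : Set (Fin N → X), B ∈ 𝔅 →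
      IsOpen {x : X | ∃ m : ℕ, (fun l : Fin N => ((T l) ^ (r l * m)) x) ∈ B} := by
    intro B hB
    have : {x : X | ∃ m : ℕ, (fun l : Fin N => ((T l) ^ (r l * m)) x) ∈ B} =
        ⋃ m : ℕ, (fun x : X => fun l : Fin N => ((T l) ^ (r l * m)) x) ⁻¹' B := by
      ext x; simp [Set.mem_iUnion]
    rw [this]
    exact isOpen_iUnion fun m => (hbasis.isOpen hB).preimage
      (continuous_pi fun l => ((T l) ^ (r l * m)).continuous)
  have hUdense : ∀ B : Set (Fin N → X), B ∈ 𝔅 →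
      Dense {x : X | ∃ m : ℕ, (fun l : Fin N => ((T l) ^ (r l * m)) x) ∈ B} := by
    intro B hB
    rw [dense_iff_inter_open]
    intro V hV hVne
    -- B is nonempty and open, so it contains a basic product open set
    have hBnonempty : B.Nonempty := Set.nonempty_iff_ne_empty.2 fun h => hBne (h ▸ hB)
    obtain ⟨p, hp⟩ := hBnonempty
    obtain ⟨t, u, hu, hsub⟩ := isOpen_pi_iff.1 (hbasis.isOpen hB) p hp
    set V' : Fin N → Set X := fun l => if l ∈ t then u l else Set.univ with hV'
    have hV'open : ∀ l, IsOpen (V' l) := by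
      intro l
      by_cases hlt : l ∈ t
      · rw [hV']; simp only [if_pos hlt]; exact (hu l hlt).1
      · rw [hV']; simp only [if_neg hlt]; exact isOpen_univ
    have hpV' : ∀ l, p l ∈ V' l := by
      intro l
      by_cases hlt : l ∈ t
      · rw [hV']; simp only [if_pos hlt]; exact (hu l hlt).2
      · rw [hV']; simp only [if_neg hlt]; trivial
    have hV'sub : Set.pi Set.univ V' ⊆ B := by
      intro y hy
      apply hsub
      intro l hl
      have hlt : l ∈ t := hl
      have := hy l (Set.mem_univ l)
      simpa [hV', hlt] using this
    -- pick points in the span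
    obtain ⟨u₀, hu₀V, hu₀span⟩ := hdense.inter_open_nonempty V hV hVne
    have hv : ∀ l : Fin N, ∃ vl : X, vl ∈ V' l ∧ vl ∈ Submodule.span ℂ (Set.range e) := by
      intro l
      obtain ⟨vl, h1, h2⟩ := hdense.inter_open_nonempty (V' l) (hV'open l) ⟨p l, hpV' l⟩
      exact ⟨vl, h1, h2⟩
    choose v hvV' hvspan using hv
    have hW : ∀ l : Fin N, ∃ W : ℕ → X, Tendsto W atTop (𝓝 0) ∧
        Tendsto (fun k => ((T l) ^ (r l * n k)) (W k)) atTop (𝓝 (v l)) ∧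
        (∀ s : Fin N, s ≠ l → Tendsto (fun k => ((T s) ^ (r s * n k)) (W k)) atTop (𝓝 0)) :=
      fun l => hq l (v l) (hvspan l)
    choose W hW0 hWl hWs using hW
    set xk : ℕ → X := fun k => u₀ + ∑ l : Fin N, W l k with hxkdef
    have hxk : Tendsto xk atTop (𝓝 u₀) := by
      have hsum : Tendsto (fun k => ∑ l : Fin N, W l k) atTop (𝓝 0) := by
        have := tendsto_finset_sum (Finset.univ : Finset (Fin N)) (fun l _ => hW0 l)
        simpa using this
      simpa using tendsto_const_nhds.add hsum
    have horb : ∀ l : Fin N,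
        Tendsto (fun k => ((T l) ^ (r l * n k)) (xk k)) atTop (𝓝 (v l)) := by
      intro l
      have h0 : Tendsto (fun k => ((T l) ^ (r l * n k)) u₀) atTop (𝓝 0) := hA l u₀ hu₀span
      have hsum : Tendsto (fun k => ∑ s : Fin N, ((T l) ^ (r l * n k)) (W s k)) atTop
          (𝓝 (v l)) := by
        have hterm : ∀ s ∈ (Finset.univ : Finset (Fin N)),
            Tendsto (fun k => ((T l) ^ (r l * n k)) (W s k)) atTop
              (𝓝 (if s = l then v l else 0)) := by
          intro s _
          by_cases hsl : s = l
          · subst hsl; simpa using hWl s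
          · simpa [hsl] using hWs s l (fun h => hsl h.symm)
        have := tendsto_finset_sum (Finset.univ : Finset (Fin N)) hterm
        simpa [Finset.sum_ite_eq'] using this
      have heq : ∀ k, ((T l) ^ (r l * n k)) (xk k) =
          ((T l) ^ (r l * n k)) u₀ + ∑ s : Fin N, ((T l) ^ (r l * n k)) (W s k) := by
        intro k
        simp [hxkdef, map_add, map_sum]
      simp only [heq]
      simpa using h0.add hsum
    have hev : ∀ᶠ k in atTop, xk k ∈ V ∧
        ∀ l : Fin N, ((T l) ^ (r l * n k)) (xk k) ∈ V' l := by
      refine (hxk.eventually_mem (hV.mem_nhds hu₀V)).and ?_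
      exact eventually_all.2 fun l => (horb l).eventually_mem ((hV'open l).mem_nhds (hvV' l))
    obtain ⟨k, hk1, hk2⟩ := hev.exists
    exact ⟨xk k, hk1, ⟨n k, hV'sub fun l _ => hk2 l⟩⟩
  -- assemble via Baire
  have hbaire : Dense (⋂ B ∈ 𝔅, {x : X | ∃ m : ℕ,
      (fun l : Fin N => ((T l) ^ (r l * m)) x) ∈ B}) :=
    dense_biInter_of_isOpen hUopen hBc hUdense
  refine hbaire.mono ?_
  intro x hx
  rw [Set.mem_setOf_eq, hbasis.dense_iff]
  intro o ho hone
  obtain ⟨m, hm⟩ := Set.mem_iInter₂.1 hx o ho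
  exact ⟨_, hm, Set.mem_range_self m⟩

lemma geom_finite (A t : ℝ) (ht : 0 ≤ t) :
    {y | y ∈ Set.Ioo (1:ℝ) 2 ∧ ∃ q : ℕ, y = A * t ^ q}.Finite := by
  rcases lt_trichotomy t 1 with h | h | h
  · have htend : Tendsto (fun q : ℕ => A * t ^ q) atTop (𝓝 0) := by
      simpa using (tendsto_pow_atTop_nhds_zero_of_lt_one ht h).const_mul A
    have hev : ∀ᶠ q : ℕ in atTop, A * t ^ q < 1 :=
      htend.eventually_lt_const one_pos
    obtain ⟨Q, hQ⟩ := eventually_atTop.1 hev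
    refine Set.Finite.subset ((Set.finite_Iio Q).image (fun q => A * t ^ q)) ?_
    rintro y ⟨⟨hy1, hy2⟩, q, rfl⟩
    refine ⟨q, ?_, rfl⟩
    by_contra hq
    exact absurd (hQ q (le_of_not_gt hq)) (not_lt.2 hy1.le)
  · refine Set.Finite.subset (Set.finite_singleton A) ?_
    rintro y ⟨_, q, rfl⟩
    simp [h]
  · by_cases hA : 0 < A
    · have htend : Tendsto (fun q : ℕ => A * t ^ q) atTop atTop :=
        (tendsto_pow_atTop_atTop_of_one_lt h).const_mul_atTop hA
      have hev : ∀ᶠ q : ℕ in atTop, 2 < A * t ^ q := htend.eventually_gt_atTop 2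
      obtain ⟨Q, hQ⟩ := eventually_atTop.1 hev
      refine Set.Finite.subset ((Set.finite_Iio Q).image (fun q => A * t ^ q)) ?_
      rintro y ⟨⟨hy1, hy2⟩, q, rfl⟩
      refine ⟨q, ?_, rfl⟩
      by_contra hq
      exact absurd (hQ q (le_of_not_gt hq)) (not_lt.2 hy2.le)
    · push_neg at hA
      refine Set.Finite.subset Set.finite_empty ?_
      rintro y ⟨⟨hy1, _⟩, q, rfl⟩
      have : A * t ^ q ≤ 0 := mul_nonpos_of_nonpos_of_nonneg hA (pow_nonneg ht q)
      linarith

lemma noper_of_dense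
    {X : Type*} [NormedAddCommGroup X] [NormedSpace ℂ X]
    {I : Type*}
    (J : X →L[ℂ] (I → ℂ))
    (e : I → X) (he : ∀ i j : I, J (e i) j = if j = i then 1 else 0)
    (f : I → X →L[ℂ] ℂ) (hf : ∀ (i : I) (x : X), f i x = J x i)
    (φ : I → I)
    {N : ℕ} (hN : 0 < N)
    (r : Fin N → ℕ)
    (b : Fin N → I → ℂ)
    (T : Fin N → X →L[ℂ] X)
    (hT : ∀ (l : Fin N) (x : X) (i : I), J (T l x) i = b l i * J x (φ i))
    (hdhc : Dense {x : X | Dense (Set.range fun m : ℕ => fun l : Fin N => ((T l) ^ (r l * m)) x)}) :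
    ∀ (i : I) (M : ℕ), 1 ≤ M → φ^[M] i ≠ i := by
  intro i M hM hfix
  set l₀ : Fin N := ⟨0, hN⟩ with hl₀
  obtain ⟨x, hx⟩ := hdhc.nonempty
  set orb : ℕ → Fin N → X := fun m => fun l => ((T l) ^ (r l * m)) x with horb
  have hxdense : Dense (Set.range orb) := hx
  set w : I → ℂ := b l₀ with hw
  -- periodicity facts
  have hqM : ∀ q : ℕ, φ^[q * M] i = i := by
    intro q
    induction q with
    | zero => simp
    | succ q ih =>
      have h1 : (q + 1) * M = q * M + M := by ring
      rw [h1, Function.iterate_add_apply, hfix, ih]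
  have hper : ∀ (a c : ℕ), φ^[a * M + c] i = φ^[c] i := by
    intro a c
    rw [Nat.add_comm, Function.iterate_add_apply, hqM]
  -- product decomposition
  have hπdec : ∀ (q j' : ℕ), (∏ v ∈ Finset.range (q * M + j'), w (φ^[v] i)) =
      (∏ v ∈ Finset.range M, w (φ^[v] (φ^[j'] i))) ^ q *
        ∏ v ∈ Finset.range j', w (φ^[v] i) := by
    intro q j'
    induction q with
    | zero => simp
    | succ q ih =>
      have h1 : (q + 1) * M + j' = (q * M + j') + M := by ring
      rw [h1, Finset.prod_range_add]
      have h2 : ∀ v ∈ Finset.range M, w (φ^[q * M + j' + v] i) = w (φ^[v] (φ^[j'] i)) := by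
        intro v _
        have h3 : q * M + j' + v = (v + j') + q * M := by ring
        rw [h3, Function.iterate_add_apply, hqM, Function.iterate_add_apply]
      rw [Finset.prod_congr rfl h2, ih]
      ring
  -- the modulus of the i-th coordinate of the orbit
  have hcoordT : ∀ m : ℕ, J ((T l₀ ^ (r l₀ * m)) x) i =
      (∏ v ∈ Finset.range (r l₀ * m), w (φ^[v] i)) * J x (φ^[r l₀ * m] i) :=
    fun m => coord_pow J φ w (T l₀) (hT l₀) (r l₀ * m) x i
  have hval : ∀ m : ℕ, ∃ j' < M, ∃ q : ℕ, ‖f i ((T l₀ ^ (r l₀ * m)) x)‖ =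
      ‖(∏ v ∈ Finset.range j', w (φ^[v] i)) * J x (φ^[j'] i)‖ *
        ‖∏ v ∈ Finset.range M, w (φ^[v] (φ^[j'] i))‖ ^ q := by
    intro m
    have hdm : (r l₀ * m / M) * M + r l₀ * m % M = r l₀ * m := by
      rw [Nat.mul_comm]
      exact Nat.div_add_mod _ _
    refine ⟨r l₀ * m % M, Nat.mod_lt _ hM, r l₀ * m / M, ?_⟩
    conv_lhs => rw [hf, hcoordT m, ← hdm]
    rw [hπdec, hper]
    simp only [norm_mul, norm_pow]
    ring
  -- the set of orbit moduli inside (1,2) is finite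
  set G : Set ℝ := {y | y ∈ Set.Ioo (1:ℝ) 2 ∧
      ∃ m : ℕ, y = ‖f i ((T l₀ ^ (r l₀ * m)) x)‖} with hG
  have hGfin : G.Finite := by
    have hsub : G ⊆ ⋃ j' ∈ Finset.range M, {y | y ∈ Set.Ioo (1:ℝ) 2 ∧
        ∃ q : ℕ, y = ‖(∏ v ∈ Finset.range j', w (φ^[v] i)) * J x (φ^[j'] i)‖ *
          ‖∏ v ∈ Finset.range M, w (φ^[v] (φ^[j'] i))‖ ^ q} := by
      rintro y ⟨hy, m, rfl⟩
      obtain ⟨j', hj', q, hq⟩ := hval m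
      exact Set.mem_biUnion (Finset.mem_range.2 hj') ⟨hy, q, hq⟩
    refine Set.Finite.subset ?_ hsub
    refine Set.Finite.biUnion (Finset.range M).finite_toSet ?_
    intro j' _
    exact geom_finite _ _ (norm_nonneg _)
  -- density of the moduli in (1,2)
  have hIoo : Set.Ioo (1:ℝ) 2 ⊆ closure G := by
    intro y hy
    rw [Metric.mem_closure_iff]
    intro ε hε
    have hfi1 : f i (e i) = 1 := by rw [hf, he, if_pos rfl]
    have hfipos : 0 < ‖f i‖ := by
      by_contra hc
      push_neg at hc
      have h0 : ‖f i‖ = 0 := le_antisymm hc (norm_nonneg _)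
      have : ‖f i (e i)‖ ≤ ‖f i‖ * ‖e i‖ := (f i).le_opNorm _
      rw [hfi1, h0] at this
      norm_num at this
    set ε' : ℝ := min ε (min (y - 1) (2 - y)) with hε'
    have hε'pos : 0 < ε' := by
      rcases hy with ⟨h1, h2⟩
      refine lt_min hε (lt_min (by linarith) (by linarith))
    set δ : ℝ := ε' / ‖f i‖ with hδ
    have hδpos : 0 < δ := div_pos hε'pos hfipos
    set pt : Fin N → X := fun _ => (y : ℂ) • e i with hpt
    obtain ⟨z, ⟨m, rfl⟩, hzdist⟩ := Metric.mem_closure_iff.1 (hxdense pt) δ hδpos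
    have hcomp : dist (pt l₀) (orb m l₀) ≤ dist pt (orb m) := dist_le_pi_dist pt (orb m) l₀
    have hptval : f i (pt l₀) = (y : ℂ) := by
      rw [hpt]
      simp only [map_smul, smul_eq_mul, hfi1, mul_one]
    have hest : ‖f i (orb m l₀) - (y : ℂ)‖ < ε' := by
      have : ‖f i (orb m l₀) - (y : ℂ)‖ = ‖f i (orb m l₀ - pt l₀)‖ := by
        rw [map_sub, hptval]
      rw [this]
      calc ‖f i (orb m l₀ - pt l₀)‖ ≤ ‖f i‖ * ‖orb m l₀ - pt l₀‖ := (f i).le_opNorm _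
        _ ≤ ‖f i‖ * dist pt (orb m) := by
            rw [← dist_eq_norm]
            refine mul_le_mul_of_nonneg_left ?_ (norm_nonneg _)
            rw [dist_comm]
            exact hcomp
        _ < ‖f i‖ * δ := by
            exact mul_lt_mul_of_pos_left hzdist hfipos
        _ = ε' := by
            rw [hδ]
            field_simp
    set zval : ℝ := ‖f i (orb m l₀)‖ with hzval
    have hynorm : ‖(y : ℂ)‖ = y := by
      rw [Complex.norm_real]; exact abs_of_pos (by linarith [hy.1])
    have hclose : |zval - y| < ε' := by
      calc |zval - y| = |‖f i (orb m l₀)‖ - ‖(y:ℂ)‖| := by rw [hzval, hynorm]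
        _ ≤ ‖f i (orb m l₀) - (y:ℂ)‖ := abs_norm_sub_norm_le _ _
        _ < ε' := hest
    have hzIoo : zval ∈ Set.Ioo (1:ℝ) 2 := by
      have h1 : ε' ≤ y - 1 := (min_le_right _ _).trans (min_le_left _ _)
      have h2 : ε' ≤ 2 - y := (min_le_right _ _).trans (min_le_right _ _)
      rcases abs_sub_lt_iff.1 hclose with ⟨ha, hb⟩
      constructor <;> [linarith; linarith]
    refine ⟨zval, ⟨hzIoo, m, rfl⟩, ?_⟩
    rw [Real.dist_eq]
    calc |y - zval| = |zval - y| := abs_sub_comm _ _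
      _ < ε' := hclose
      _ ≤ ε := min_le_left _ _
  -- contradiction
  have hclosed : closure G = G := hGfin.isClosed.closure_eq
  rw [hclosed] at hIoo
  exact ((Set.Ioo_infinite (by norm_num : (1:ℝ) < 2)).mono hIoo) hGfin

lemma iterate_inj {I : Type*} {φ : I → I} (hφ : Function.Injective φ)
    (hnp : ∀ (i : I) (M : ℕ), 1 ≤ M → φ^[M] i ≠ i) (j : I) :
    Function.Injective fun a : ℕ => φ^[a] j := by
  intro a c hac
  simp only at hac
  rcases lt_trichotomy a c with h | h | h
  · exfalso
    have h1 : φ^[a] (φ^[c - a] j) = φ^[a] j := by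
      rw [← Function.iterate_add_apply, Nat.add_sub_cancel' h.le]
      exact hac.symm
    exact hnp j (c - a) (by omega) (hφ.iterate a h1)
  · exact h
  · exfalso
    have h1 : φ^[c] (φ^[a - c] j) = φ^[c] j := by
      rw [← Function.iterate_add_apply, Nat.add_sub_cancel' h.le]
      exact hac
    exact hnp j (a - c) (by omega) (hφ.iterate c h1)

lemma fin_forward {I : Type*} {φ : I → I}
    (hinj : ∀ j : I, Function.Injective fun a : ℕ => φ^[a] j)
    (t : ℕ) (ht : 1 ≤ t) (i : I) (F : Finset I) :
    {m : ℕ | φ^[t * m] i ∈ (F : Set I)}.Finite := by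
  have hinj2 : Function.Injective fun m : ℕ => φ^[t * m] i := by
    intro a c hac
    exact Nat.eq_of_mul_eq_mul_left (by omega) (hinj i hac)
  exact Set.Finite.preimage hinj2.injOn F.finite_toSet

lemma fin_backward {I : Type*} {φ : I → I}
    (hinj : ∀ j : I, Function.Injective fun a : ℕ => φ^[a] j)
    (t : ℕ) (ht : 1 ≤ t) (i : I) (F : Finset I) :
    {m : ℕ | ∃ j ∈ F, φ^[t * m] j = i}.Finite := by
  have hsub : {m : ℕ | ∃ j ∈ F, φ^[t * m] j = i} ⊆
      ⋃ j ∈ (F : Set I), {m : ℕ | φ^[t * m] j = i} := by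
    rintro m ⟨j, hjF, hj⟩
    exact Set.mem_biUnion hjF hj
  refine Set.Finite.subset (Set.Finite.biUnion F.finite_toSet fun j _ => ?_) hsub
  apply Set.Subsingleton.finite
  intro a ha c hc
  have h1 : (fun a : ℕ => φ^[t * a] j) a = (fun a : ℕ => φ^[t * a] j) c := by
    simpa using ha.trans hc.symm
  have := hinj j h1
  exact Nat.eq_of_mul_eq_mul_left (by omega) this

lemma est_main {X : Type*} [NormedAddCommGroup X] [NormedSpace ℂ X] {I : Type*}
    (e : I → X) (f : I → X →L[ℂ] ℂ) (C : ℝ) (hOP : ∀ j : I, ‖e j‖ * ‖f j‖ ≤ C)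
    (F : Finset I) (u : X) (hfu : ∀ j : I, f j u = if j ∈ F then 1 else 0)
    (ε : ℝ) (hε : 0 ≤ ε)
    {i j : I} (hi : i ∈ F) (hj : j ∉ F) (hfiε : ‖f i‖ * ε ≤ 1/2)
    (za zd : X) (hza : ‖za - u‖ ≤ ε) (hzd : ‖zd - u‖ ≤ ε)
    (q : ℝ) (hq0 : 0 ≤ q) (heq : q * ‖f i za‖ = ‖f j zd‖ * ‖e j‖) :
    q ≤ 2 * (C * ε) := by
  have ha1 : ‖f i za - 1‖ ≤ 1/2 := by
    have h1 : f i za - 1 = f i (za - u) := by rw [map_sub, hfu i, if_pos hi]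
    rw [h1]
    calc ‖f i (za - u)‖ ≤ ‖f i‖ * ‖za - u‖ := (f i).le_opNorm _
      _ ≤ ‖f i‖ * ε := mul_le_mul_of_nonneg_left hza (norm_nonneg _)
      _ ≤ 1/2 := hfiε
  have ha : 1/2 ≤ ‖f i za‖ := by
    have h2 := abs_norm_sub_norm_le (f i za) 1
    rw [norm_one] at h2
    have h3 := (h2.trans ha1)
    rcases abs_le.1 h3 with ⟨h4, _⟩
    linarith
  have hd : ‖f j zd‖ * ‖e j‖ ≤ C * ε := by
    have h1 : f j zd = f j (zd - u) := by rw [map_sub, hfu j, if_neg hj, sub_zero]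
    calc ‖f j zd‖ * ‖e j‖ ≤ (‖f j‖ * ε) * ‖e j‖ := by
          refine mul_le_mul_of_nonneg_right ?_ (norm_nonneg _)
          rw [h1]
          exact ((f j).le_opNorm _).trans (mul_le_mul_of_nonneg_left hzd (norm_nonneg _))
      _ = (‖e j‖ * ‖f j‖) * ε := by ring
      _ ≤ C * ε := mul_le_mul_of_nonneg_right (hOP j) hε
  nlinarith [heq, ha, hd, hq0]

lemma arith1 (A E B : ℝ) (hA : A ≠ 0) : A⁻¹ * E * (A * B) = B * E := by
  field_simp

lemma arith2 (A Cq E B : ℝ) (hA : A ≠ 0) : A⁻¹ * Cq * E * (A * B) = Cq * B * E := by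
  field_simp

theorem stmt0
    {X : Type*} [NormedAddCommGroup X] [NormedSpace ℂ X] [CompleteSpace X]
    [TopologicalSpace.SeparableSpace X] (hinfdim : ¬ FiniteDimensional ℂ X)
    {I : Type*} [Countable I] [Infinite I]
    (J : X →L[ℂ] (I → ℂ)) (hJ : Function.Injective J)
    (e : I → X) (he : ∀ i j : I, J (e i) j = if j = i then 1 else 0)
    (f : I → X →L[ℂ] ℂ) (hf : ∀ (i : I) (x : X), f i x = J x i)
    (hdense : Dense (Submodule.span ℂ (Set.range e) : Set X))
    (hOP : ∃ C : ℝ, ∀ i : I, ‖e i‖ * ‖f i‖ ≤ C)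
    (φ : I → I) (hφ : Function.Injective φ)
    {N : ℕ} (hN : 2 ≤ N)
    (r : Fin N → ℕ) (hr1 : ∀ l, 1 ≤ r l) (hr : StrictMono r)
    (b : Fin N → I → ℂ) (hb : ∀ l i, b l i ≠ 0)
    (T : Fin N → X →L[ℂ] X)
    (hT : ∀ (l : Fin N) (x : X) (i : I), J (T l x) i = b l i * J x (φ i)) :
    Dense {x : X | Dense (Set.range fun n : ℕ => fun l : Fin N => ((T l) ^ (r l * n)) x)}
      ↔
    ((∀ i : I, ∀ M : ℕ, 1 ≤ M → φ^[M] i ≠ i) ∧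
      ∃ n : ℕ → ℕ, StrictMono n ∧ (∀ k, 1 ≤ n k) ∧
        ∀ i : I,
          (∀ l : Fin N,
            Tendsto (fun k => ‖(∏ v ∈ Finset.range (r l * n k), b l (φ^[v] i))⁻¹ •
                e (φ^[r l * n k] i)‖) atTop (𝓝 0) ∧
            Tendsto (fun k => ‖backVec φ (b l) e (r l * n k) i‖) atTop (𝓝 0)) ∧
          (∀ s l : Fin N, s < l →
            Tendsto (fun k => ‖(∏ v ∈ Finset.range (r s * n k), b s (φ^[v] i))⁻¹ •
                backVec φ (b l) e (r l * n k) (φ^[r s * n k] i)‖) atTop (𝓝 0) ∧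
            Tendsto (fun k => ‖(∏ v ∈ Finset.range (r l * n k), b l (φ^[v] i))⁻¹ •
                backVec φ (b s) e (r s * n k) (φ^[r l * n k] i)‖) atTop (𝓝 0))) := by
  constructor
  · intro hdhc
    have hnp : ∀ (i : I) (M : ℕ), 1 ≤ M → φ^[M] i ≠ i :=
      noper_of_dense J e he f hf φ (by omega) r b T hT hdhc
    refine ⟨hnp, ?_⟩
    have hinj : ∀ j : I, Function.Injective fun a : ℕ => φ^[a] j := iterate_inj hφ hnp
    -- enumeration of I
    have hEnc : Encodable I := Encodable.ofCountable I
    have hDen : Denumerable I := @Denumerable.ofEncodableOfInfinite I hEnc _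
    set g : ℕ ≃ I := (@Denumerable.eqv I hDen).symm with hg
    set F : ℕ → Finset I := fun k => (Finset.range (k+1)).image g with hF
    have hmemF : ∀ (i : I) (k : ℕ), g.symm i ≤ k → i ∈ F k := by
      intro i k h
      exact Finset.mem_image.2 ⟨g.symm i, Finset.mem_range.2 (by omega), g.apply_symm_apply i⟩
    obtain ⟨C, hC⟩ := hOP
    set Cp : ℝ := max C 0 with hCp
    have hOP' : ∀ j : I, ‖e j‖ * ‖f j‖ ≤ Cp := fun j => (hC j).trans (le_max_left _ _)
    have hCp0 : 0 ≤ Cp := le_max_right _ _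
    set D : ℕ → ℝ := fun k => 1 + Cp + ∑ i ∈ F k, ‖f i‖ with hD
    have hsum0 : ∀ k, 0 ≤ ∑ i ∈ F k, ‖f i‖ :=
      fun k => Finset.sum_nonneg fun i _ => norm_nonneg _
    have hD1 : ∀ k, 1 ≤ D k := by
      intro k
      have := hsum0 k
      simp only [hD]
      linarith
    set ε : ℕ → ℝ := fun k => 1 / (2 * (k+1) * D k) with hε
    have hεpos : ∀ k, 0 < ε k := by
      intro k
      have h1 := hD1 k
      apply div_pos one_pos
      positivity
    have hDε : ∀ k, D k * ε k = 1/(2*((k:ℝ)+1)) := by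
      intro k
      have h3 := hD1 k
      have h4 : (0:ℝ) < (k:ℝ) + 1 := by positivity
      rw [hε]
      field_simp
    have hfε : ∀ k, ∀ i ∈ F k, ‖f i‖ * ε k ≤ 1/2 := by
      intro k i hi
      have h1 : ‖f i‖ ≤ D k := by
        have h2 : ‖f i‖ ≤ ∑ i' ∈ F k, ‖f i'‖ :=
          Finset.single_le_sum (fun i' _ => norm_nonneg (f i')) hi
        simp only [hD]
        linarith
      have h4 : (0:ℝ) < (k:ℝ) + 1 := by positivity
      have h5 : ‖f i‖ * ε k ≤ D k * ε k := mul_le_mul_of_nonneg_right h1 (hεpos k).le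
      have h6 := hDε k
      have h7 : 1/(2*((k:ℝ)+1)) ≤ 1/2 := by
        rw [div_le_div_iff₀ (by positivity) (by norm_num)]
        nlinarith
      calc ‖f i‖ * ε k ≤ D k * ε k := h5
        _ = 1/(2*((k:ℝ)+1)) := h6
        _ ≤ 1/2 := h7
    have hCε : ∀ k, 2 * (Cp * ε k) ≤ 1/((k:ℝ)+1) := by
      intro k
      have h1 : Cp ≤ D k := by
        have := hsum0 k
        simp only [hD]; linarith
      have h4 : (0:ℝ) < (k:ℝ) + 1 := by positivity
      have h5 : Cp * ε k ≤ D k * ε k := mul_le_mul_of_nonneg_right h1 (hεpos k).le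
      have h6 := hDε k
      have h7 : 2 * (1/(2*((k:ℝ)+1))) = 1/((k:ℝ)+1) := by field_simp
      calc 2 * (Cp * ε k) ≤ 2 * (D k * ε k) := by linarith
        _ = 2 * (1/(2*((k:ℝ)+1))) := by rw [h6]
        _ = 1/((k:ℝ)+1) := h7
    -- the key existence step
    have key : ∀ (k p : ℕ), ∃ m : ℕ, p < m ∧ ∀ i ∈ F k,
        (∀ l : Fin N,
          ‖(∏ v ∈ Finset.range (r l * m), b l (φ^[v] i))⁻¹ • e (φ^[r l * m] i)‖ ≤ 1/((k:ℝ)+1) ∧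
          ‖backVec φ (b l) e (r l * m) i‖ ≤ 1/((k:ℝ)+1)) ∧
        (∀ s l : Fin N, s < l →
          ‖(∏ v ∈ Finset.range (r s * m), b s (φ^[v] i))⁻¹ •
            backVec φ (b l) e (r l * m) (φ^[r s * m] i)‖ ≤ 1/((k:ℝ)+1) ∧
          ‖(∏ v ∈ Finset.range (r l * m), b l (φ^[v] i))⁻¹ •
            backVec φ (b s) e (r s * m) (φ^[r l * m] i)‖ ≤ 1/((k:ℝ)+1)) := by
      intro k p
      set u : X := ∑ i' ∈ F k, e i' with hu
      have hfu : ∀ j : I, f j u = if j ∈ F k then 1 else 0 := by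
        intro j
        rw [hu, map_sum]
        have h1 : ∀ i' ∈ F k, f j (e i') = if j = i' then 1 else 0 := by
          intro i' _
          rw [hf, he]
        rw [Finset.sum_congr rfl h1]
        exact Finset.sum_ite_eq (F k) j (fun _ => 1)
      obtain ⟨x, hxball, hxS⟩ := hdhc.inter_open_nonempty (Metric.ball u (ε k))
        Metric.isOpen_ball ⟨u, Metric.mem_ball_self (hεpos k)⟩
      have hxu : ‖x - u‖ ≤ ε k := (mem_ball_iff_norm.1 hxball).le
      set orb : ℕ → Fin N → X := fun m => fun l => ((T l) ^ (r l * m)) x with horb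
      have hxdense : Dense (Set.range orb) := hxS
      set Bad : Set ℕ := {m | m ≤ p} ∪ ⋃ i ∈ (F k : Set I), ⋃ l : Fin N, ⋃ s : Fin N,
          ({m : ℕ | φ^[r l * m] i ∈ (F k : Set I)} ∪
           {m : ℕ | ∃ j ∈ F k, φ^[r l * m] j = i} ∪
           {m : ℕ | s < l ∧ ∃ j ∈ F k, φ^[(r l - r s) * m] j = i} ∪
           {m : ℕ | s < l ∧ φ^[(r l - r s) * m] i ∈ (F k : Set I)}) with hBad
      have hBadFin : Bad.Finite := by
        refine Set.Finite.union (Set.finite_Iic p) ?_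
        refine Set.Finite.biUnion (F k).finite_toSet fun i _ => ?_
        refine Set.finite_iUnion fun l => ?_
        refine Set.finite_iUnion fun s => ?_
        refine Set.Finite.union (Set.Finite.union (Set.Finite.union ?_ ?_) ?_) ?_
        · exact fin_forward hinj (r l) (hr1 l) i (F k)
        · exact fin_backward hinj (r l) (hr1 l) i (F k)
        · by_cases hsl : s < l
          · refine Set.Finite.subset (fin_backward hinj (r l - r s) ?_ i (F k))
              fun m hm => hm.2
            have := hr hsl; omega
          · exact Set.Finite.subset Set.finite_empty fun m hm => absurd hm.1 hsl
        · by_cases hsl : s < l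
          · refine Set.Finite.subset (fin_forward hinj (r l - r s) ?_ i (F k))
              fun m hm => hm.2
            have := hr hsl; omega
          · exact Set.Finite.subset Set.finite_empty fun m hm => absurd hm.1 hsl
      have hntX : Nontrivial X := by
        rcases subsingleton_or_nontrivial X with h | h
        · exact absurd (by infer_instance) hinfdim
        · exact h
      have hneFin : Nonempty (Fin N) := ⟨⟨0, by omega⟩⟩
      have hNB : ∀ y : Fin N → X, NeBot (𝓝[≠] y) :=
        fun y => Module.punctured_nhds_neBot ℂ _ y
      have hdense2 : Dense (Set.range orb \ orb '' Bad) :=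
        hxdense.diff_finite (hBadFin.image orb)
      obtain ⟨y, hyball, hymem⟩ := hdense2.inter_open_nonempty
        (Metric.ball (fun _ : Fin N => u) (ε k)) Metric.isOpen_ball
        ⟨_, Metric.mem_ball_self (hεpos k)⟩
      obtain ⟨⟨m, rfl⟩, hynb⟩ := hymem
      have hmBad : m ∉ Bad := fun hc => hynb (Set.mem_image_of_mem orb hc)
      have hclose : ∀ l : Fin N, ‖((T l) ^ (r l * m)) x - u‖ ≤ ε k := by
        intro l
        have h1 := (dist_pi_lt_iff (hεpos k)).1 (Metric.mem_ball.1 hyball) l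
        rw [dist_eq_norm] at h1
        exact h1.le
      -- unpack m ∉ Bad
      have hple : p < m := by
        by_contra h
        push_neg at h
        exact hmBad (Set.mem_union_left _ h)
      have hF1 : ∀ i ∈ F k, ∀ l : Fin N, φ^[r l * m] i ∉ F k := by
        intro i hi l hmem
        exact hmBad (Set.mem_union_right _ (Set.mem_biUnion (Finset.mem_coe.2 hi)
          (Set.mem_iUnion.2 ⟨l, Set.mem_iUnion.2 ⟨l,
            Set.mem_union_left _ (Set.mem_union_left _ (Set.mem_union_left _
              (Finset.mem_coe.2 hmem)))⟩⟩)))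
      have hF2 : ∀ i ∈ F k, ∀ l : Fin N, ∀ j0 ∈ F k, φ^[r l * m] j0 ≠ i := by
        intro i hi l j0 hj0 hji
        exact hmBad (Set.mem_union_right _ (Set.mem_biUnion (Finset.mem_coe.2 hi)
          (Set.mem_iUnion.2 ⟨l, Set.mem_iUnion.2 ⟨l,
            Set.mem_union_left _ (Set.mem_union_left _ (Set.mem_union_right _
              ⟨j0, hj0, hji⟩))⟩⟩)))
      have hF3 : ∀ i ∈ F k, ∀ s l : Fin N, s < l → ∀ j0 ∈ F k,
          φ^[(r l - r s) * m] j0 ≠ i := by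
        intro i hi s l hsl j0 hj0 hji
        exact hmBad (Set.mem_union_right _ (Set.mem_biUnion (Finset.mem_coe.2 hi)
          (Set.mem_iUnion.2 ⟨l, Set.mem_iUnion.2 ⟨s,
            Set.mem_union_left _ (Set.mem_union_right _ ⟨hsl, j0, hj0, hji⟩)⟩⟩)))
      have hF4 : ∀ i ∈ F k, ∀ s l : Fin N, s < l → φ^[(r l - r s) * m] i ∉ F k := by
        intro i hi s l hsl hmem
        exact hmBad (Set.mem_union_right _ (Set.mem_biUnion (Finset.mem_coe.2 hi)
          (Set.mem_iUnion.2 ⟨l, Set.mem_iUnion.2 ⟨s,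
            Set.mem_union_right _ ⟨hsl, Finset.mem_coe.2 hmem⟩⟩⟩)))
      -- coordinate formula and nonvanishing
      have hcoord : ∀ (l : Fin N) (mm : ℕ) (j : I), f j ((T l ^ mm) x) =
          (∏ v ∈ Finset.range mm, b l (φ^[v] j)) * J x (φ^[mm] j) := by
        intro l mm j
        rw [hf]
        exact coord_pow J φ (b l) (T l) (hT l) mm x j
      have hcne : ∀ (l : Fin N) (mm : ℕ) (j : I),
          ‖∏ v ∈ Finset.range mm, b l (φ^[v] j)‖ ≠ 0 :=
        fun l mm j => norm_ne_zero_iff.2 (Finset.prod_ne_zero_iff.2 fun v _ => hb l _)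
      refine ⟨m, hple, ?_⟩
      intro i hi
      have EST : ∀ (j : I), j ∉ F k → ∀ za zd : X, ‖za - u‖ ≤ ε k → ‖zd - u‖ ≤ ε k →
          ∀ q : ℝ, 0 ≤ q → q * ‖f i za‖ = ‖f j zd‖ * ‖e j‖ → q ≤ 1/((k:ℝ)+1) :=
        fun j hj za zd hza hzd q hq0 heq =>
          (est_main e f Cp hOP' (F k) u hfu (ε k) (hεpos k).le hi hj (hfε k i hi)
            za zd hza hzd q hq0 heq).trans (hCε k)
      refine ⟨?_, ?_⟩
      · intro l
        refine ⟨?_, ?_⟩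
        · have hjF : φ^[r l * m] i ∉ F k := hF1 i hi l
          refine EST _ hjF ((T l ^ (r l * m)) x) x (hclose l) hxu _ (norm_nonneg _) ?_
          rw [hcoord l (r l * m) i, hf]
          simp only [norm_smul, norm_mul, norm_inv]
          exact arith1 _ _ _ (hcne l (r l * m) i)
        · by_cases hex : ∃ j0, φ^[r l * m] j0 = i
          · obtain ⟨j0, hj0⟩ := hex
            have hbv : backVec φ (b l) e (r l * m) i =
                (∏ v ∈ Finset.range (r l * m), b l (φ^[v] j0)) • e j0 := by
              rw [← hj0, backVec_eq hφ]
            have hj0F : j0 ∉ F k := fun hc => hF2 i hi l j0 hc hj0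
            refine EST _ hj0F x ((T l ^ (r l * m)) x) hxu (hclose l) _ (norm_nonneg _) ?_
            rw [hbv, hcoord l (r l * m) j0, hj0, hf]
            simp only [norm_smul, norm_mul]
            ring
          · rw [backVec_zero _ _ _ _ _ hex, norm_zero]
            positivity
      · intro s l hsl
        have hrsl : r s * m + (r l - r s) * m = r l * m := by
          have h1 := (hr hsl).le
          have h2 : r s + (r l - r s) = r l := Nat.add_sub_cancel' h1
          calc r s * m + (r l - r s) * m = (r s + (r l - r s)) * m := by ring
            _ = r l * m := by rw [h2]
        refine ⟨?_, ?_⟩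
        · by_cases hex : ∃ j0, φ^[r l * m] j0 = φ^[r s * m] i
          · obtain ⟨j0, hj0⟩ := hex
            have hbv : backVec φ (b l) e (r l * m) (φ^[r s * m] i) =
                (∏ v ∈ Finset.range (r l * m), b l (φ^[v] j0)) • e j0 := by
              rw [← hj0, backVec_eq hφ]
            have hj0i : φ^[(r l - r s) * m] j0 = i := by
              refine hφ.iterate (r s * m) ?_
              rw [← Function.iterate_add_apply, hrsl]
              exact hj0
            have hj0F : j0 ∉ F k := fun hc => hF3 i hi s l hsl j0 hc hj0i
            refine EST _ hj0F ((T s ^ (r s * m)) x) ((T l ^ (r l * m)) x)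
              (hclose s) (hclose l) _ (norm_nonneg _) ?_
            rw [hbv, smul_smul, hcoord l (r l * m) j0, hj0, hcoord s (r s * m) i]
            simp only [norm_smul, norm_mul, norm_inv]
            exact arith2 _ _ _ _ (hcne s (r s * m) i)
          · rw [backVec_zero _ _ _ _ _ hex, smul_zero, norm_zero]
            positivity
        · have hj0 : φ^[r s * m] (φ^[(r l - r s) * m] i) = φ^[r l * m] i := by
            rw [← Function.iterate_add_apply, hrsl]
          have hbv : backVec φ (b s) e (r s * m) (φ^[r l * m] i) =
              (∏ v ∈ Finset.range (r s * m), b s (φ^[v] (φ^[(r l - r s) * m] i))) •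
                e (φ^[(r l - r s) * m] i) := by
            rw [← hj0, backVec_eq hφ]
          have hj0F : φ^[(r l - r s) * m] i ∉ F k := hF4 i hi s l hsl
          refine EST _ hj0F ((T l ^ (r l * m)) x) ((T s ^ (r s * m)) x)
            (hclose l) (hclose s) _ (norm_nonneg _) ?_
          rw [hbv, smul_smul, hcoord s (r s * m) _, hj0, hcoord l (r l * m) i]
          simp only [norm_smul, norm_mul, norm_inv]
          exact arith2 _ _ _ _ (hcne l (r l * m) i)
    -- recursive construction of the sequence n
    choose mfun hm1 hm2 using key
    set n : ℕ → ℕ := fun k => Nat.rec (mfun 0 0) (fun k' prev => mfun (k'+1) prev) k with hn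
    have hnsucc : ∀ k, n k < n (k+1) := fun k => hm1 (k+1) (n k)
    have hnmono : StrictMono n := strictMono_nat_of_lt_succ hnsucc
    have hn1 : ∀ k, 1 ≤ n k := by
      intro k
      induction k with
      | zero => exact hm1 0 0
      | succ k ih => have := hnsucc k; omega
    have hQ : ∀ k, ∀ i ∈ F k,
        (∀ l : Fin N,
          ‖(∏ v ∈ Finset.range (r l * n k), b l (φ^[v] i))⁻¹ • e (φ^[r l * n k] i)‖ ≤ 1/((k:ℝ)+1) ∧
          ‖backVec φ (b l) e (r l * n k) i‖ ≤ 1/((k:ℝ)+1)) ∧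
        (∀ s l : Fin N, s < l →
          ‖(∏ v ∈ Finset.range (r s * n k), b s (φ^[v] i))⁻¹ •
            backVec φ (b l) e (r l * n k) (φ^[r s * n k] i)‖ ≤ 1/((k:ℝ)+1) ∧
          ‖(∏ v ∈ Finset.range (r l * n k), b l (φ^[v] i))⁻¹ •
            backVec φ (b s) e (r s * n k) (φ^[r l * n k] i)‖ ≤ 1/((k:ℝ)+1)) := by
      intro k
      cases k with
      | zero => exact hm2 0 0
      | succ k => exact hm2 (k+1) (n k)
    refine ⟨n, hnmono, hn1, ?_⟩
    intro i
    have hiF : ∀ k, g.symm i ≤ k → i ∈ F k := hmemF i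
    have hsq : ∀ q : ℕ → ℝ, (∀ k, 0 ≤ q k) →
        (∀ k, g.symm i ≤ k → q k ≤ 1/((k:ℝ)+1)) → Tendsto q atTop (𝓝 0) := by
      intro q hq0 hqb
      refine squeeze_zero' (Eventually.of_forall hq0) ?_
        tendsto_one_div_add_atTop_nhds_zero_nat
      exact eventually_atTop.2 ⟨g.symm i, hqb⟩
    constructor
    · intro l
      constructor
      · exact hsq _ (fun k => norm_nonneg _)
          (fun k hk => ((hQ k i (hiF k hk)).1 l).1)
      · exact hsq _ (fun k => norm_nonneg _)
          (fun k hk => ((hQ k i (hiF k hk)).1 l).2)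
    · intro s l hsl
      constructor
      · exact hsq _ (fun k => norm_nonneg _)
          (fun k hk => ((hQ k i (hiF k hk)).2 s l hsl).1)
      · exact hsq _ (fun k => norm_nonneg _)
          (fun k hk => ((hQ k i (hiF k hk)).2 s l hsl).2)
  · rintro ⟨hnoper, n, hmono, hn1, H⟩
    exact left_of_right J hJ e he hdense φ hφ r b hb T hT n
      (fun i l => ((H i).1 l).1) (fun i l => ((H i).1 l).2)
      (fun i s l hsl => ((H i).2 s l hsl).1) (fun i s l hsl => ((H i).2 s l hsl).2)
end

section
/- Let X be a Banach sequence space over a countably infinite index set I in which the canonical unit vectors (e_i)_{i∈I} form an OP-basis, let integers 1 ≤ r₁ < r₂ < ⋯ < r_N (N ≥ 2) be given, and for each 1 ≤ l ≤ N let T_l = T_{b^{(l)},φ_l} : X → X be a weighted pseudo-shift with weight sequence b^{(l)} = (b_i^{(l)})_{i∈I} of nonzero scalars and injective map φ_l : I → I. Suppose there exists a strictly increasing sequence (n_k)_{k≥1} of positive integers such that for every i ∈ I: for each 1 ≤ l ≤ N, ‖(∏_{v=0}^{r_l n_k−1} b^{(l)}_{φ_l^v(i)})^{−1} e_{φ_l^{r_l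 n_k}(i)}‖ → 0 and ‖(∏_{v=1}^{r_l n_k} b^{(l)}_{ψ_l^v(i)}) e_{ψ_l^{r_l n_k}(i)}‖ → 0 as k → ∞; and for all 1 ≤ s < l ≤ N, ‖(∏_{v=0}^{r_s n_k−1} b^{(s)}_{φ_s^v(i)})^{−1} (∏_{v=1}^{r_l n_k} b^{(l)}_{ψ_l^v(φ_s^{r_s n_k}(i))}) e_{ψ_l^{r_l n_k}(φ_s^{r_s n_k}(i))}‖ → 0 and ‖(∏_{v=0}^{r_l n_k−1} b^{(l)}_{φ_l^v(i)})^{−1} (∏_{v=1}^{r_s n_k} b^{(s)}_{ψ_s^v(φ_l^{r_l n_k}(i))}) e_{ψ_s^{r_s n_k}(φ_l^{r_l n_k}(i))}‖ → 0 as k → ∞. Then T₁^{r₁}, T₂^{r₂}, …, T_N^{r_N} satisfy the d-Hypercyclicity Criterion (with respect to (n_k)). -/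
/-!
Take `X₀ = X_l = span {e i}`. Writing `x ∈ X₀` as some finite combination `Σ c_i e_i` and letting
`Σ_{l,k} x = Σ c_i (∏_{v<r_l n_k} b^{(l)}_{φ_l^v(i)})⁻¹ e_{φ_l^{r_l n_k}(i)}`, each condition of the
criterion becomes a finite combination of the same condition on the generators `e i`; no uniqueness
of the coefficients is needed. On generators, `T_l^{r_l n_k}` maps `e j` to the `backVec` term and
is a left inverse of `Σ_{l,k}`, so those conditions are exactly the hypotheses.
-/

open Filter Topology
open scoped Classical

/-- Continuous linear operators `T 0, …, T (N-1)` on `X` satisfy the d-Hypercyclicity Criterion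
with respect to the strictly increasing sequence `(n k)` of positive integers. -/
def DHypCriterionWrt {X : Type*} [NormedAddCommGroup X] [NormedSpace ℂ X]
    {N : ℕ} (T : Fin N → X →L[ℂ] X) (n : ℕ → ℕ) : Prop :=
  ∃ (X₀ : Set X) (Xs : Fin N → Set X) (S : Fin N → ℕ → X → X),
    Dense X₀ ∧ (∀ l, Dense (Xs l)) ∧
    (∀ l : Fin N, ∀ x ∈ X₀, Tendsto (fun k => ((T l) ^ (n k)) x) atTop (𝓝 0)) ∧
    (∀ l : Fin N, ∀ x ∈ Xs l, Tendsto (fun k => S l k x) atTop (𝓝 0)) ∧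
    (∀ l i : Fin N, ∀ x ∈ Xs i,
      Tendsto (fun k => ((T l) ^ (n k)) (S i k x) - (if i = l then x else 0)) atTop (𝓝 0))

theorem Finsupp.tendsto_linearCombination {α R M ι : Type*} [Semiring R] [TopologicalSpace M]
    [AddCommMonoid M] [Module R M] [ContinuousAdd M] [ContinuousConstSMul R M]
    {l : Filter ι} {g : ι → α → M} {g₀ : α → M} (h : ∀ i, Tendsto (fun k => g k i) l (𝓝 (g₀ i)))
    (c : α →₀ R) :
    Tendsto (fun k => linearCombination R (g k) c) l (𝓝 (linearCombination R g₀ c)) := by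
  simp only [linearCombination_apply, Finsupp.sum]
  exact tendsto_finsetSum _ fun i _ => (h i).const_smul (c i)

theorem dHypCriterionWrt_of_dense_span {X I : Type*} [NormedAddCommGroup X] [NormedSpace ℂ X]
    {N : ℕ} (T : Fin N → X →L[ℂ] X) (n : ℕ → ℕ) (e : I → X)
    (hdense : Dense (Submodule.span ℂ (Set.range e) : Set X)) (u : Fin N → ℕ → I → X)
    (hT : ∀ l i, Tendsto (fun k => (T l ^ n k) (e i)) atTop (𝓝 0))
    (hu : ∀ l i, Tendsto (fun k => u l k i) atTop (𝓝 0))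
    (hTu : ∀ s l i, Tendsto (fun k => (T l ^ n k) (u s k i)) atTop
      (𝓝 (if s = l then e i else 0))) :
    DHypCriterionWrt T n := by
  have hrepr : ∀ x ∈ (Submodule.span ℂ (Set.range e) : Set X),
      ∃ c : I →₀ ℂ, Finsupp.linearCombination ℂ e c = x := fun x hx => by
    rwa [SetLike.mem_coe, ← Finsupp.range_linearCombination] at hx
  choose! c hc using hrepr
  have hpow : ∀ l k (v : I → X) x,
      (T l ^ n k) (Finsupp.linearCombination ℂ v (c x))
        = Finsupp.linearCombination ℂ (fun i => (T l ^ n k) (v i)) (c x) := fun l k v x =>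
    Finsupp.apply_linearCombination ℂ (T l ^ n k).toLinearMap v (c x)
  refine ⟨_, fun _ => _, fun l k x => Finsupp.linearCombination ℂ (u l k) (c x),
    hdense, fun _ => hdense, fun l x hx => ?_, fun l x _ => ?_, fun l s x hx => ?_⟩
  · rw [← hc x hx]
    simpa only [hpow, Finsupp.linearCombination_zero, LinearMap.zero_apply] using
      Finsupp.tendsto_linearCombination (g₀ := 0) (hT l) (c x)
  · simpa only [Finsupp.linearCombination_zero, LinearMap.zero_apply] using
      Finsupp.tendsto_linearCombination (g₀ := 0) (hu l) (c x)
  · simp only [tendsto_sub_nhds_zero_iff, hpow]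
    have hlim := Finsupp.tendsto_linearCombination (hTu s l) (c x)
    split_ifs at hlim ⊢
    · rwa [hc x hx] at hlim
    · simpa only [← Pi.zero_def, Finsupp.linearCombination_zero, LinearMap.zero_apply] using hlim

section PseudoShift

variable {I X : Type*} [NormedAddCommGroup X] [NormedSpace ℂ X]
  {J : X →L[ℂ] (I → ℂ)} {e : I → X} {φ : I → I} {b : I → ℂ} {T : X →L[ℂ] X}

noncomputable def forwardVec (φ : I → I) (b : I → ℂ) (e : I → X) (m : ℕ) (i : I) : X :=
  (∏ v ∈ Finset.range m, b (φ^[v] i))⁻¹ • e (φ^[m] i)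

theorem pseudoShift_pow_coord (hT : ∀ x i, J (T x) i = b i * J x (φ i)) (m : ℕ) (x : X) (i : I) :
    J ((T ^ m) x) i = (∏ v ∈ Finset.range m, b (φ^[v] i)) * J x (φ^[m] i) := by
  induction m generalizing x with
  | zero => simp
  | succ m ih =>
    rw [pow_succ, mul_apply_eq_comp, ih, hT, Finset.prod_range_succ,
      Function.iterate_succ_apply']
    ring

theorem pseudoShift_pow_apply_unitVec (hJ : Function.Injective J)
    (he : ∀ i j, J (e i) j = if j = i then 1 else 0) (hφ : Function.Injective φ)
    (hT : ∀ x i, J (T x) i = b i * J x (φ i)) (m : ℕ) (j : I) :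
    (T ^ m) (e j) = backVec φ b e m j := by
  apply hJ
  funext i
  rw [pseudoShift_pow_coord hT, he, backVec]
  by_cases hpre : ∃ a, φ^[m] a = j
  · rw [dif_pos hpre]
    set a := Classical.choose hpre
    have ha : φ^[m] a = j := Classical.choose_spec hpre
    simp only [map_smul, Pi.smul_apply, he, smul_eq_mul]
    by_cases hi : i = a
    · simp [hi, ha]
    · have hij : φ^[m] i ≠ j := ha ▸ (hφ.iterate m).ne hi
      simp [hi, hij]
  · have hij : φ^[m] i ≠ j := fun hij => hpre ⟨i, hij⟩
    simp [dif_neg hpre, hij]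

theorem backVec_iterate (hφ : Function.Injective φ) (m : ℕ) (j : I) :
    backVec φ b e m (φ^[m] j) = (∏ v ∈ Finset.range m, b (φ^[v] j)) • e j := by
  have hpre : ∃ a, φ^[m] a = φ^[m] j := ⟨j, rfl⟩
  rw [backVec, dif_pos hpre, (hφ.iterate m) (Classical.choose_spec hpre)]

theorem pseudoShift_pow_apply_forwardVec (hJ : Function.Injective J)
    (he : ∀ i j, J (e i) j = if j = i then 1 else 0) (hφ : Function.Injective φ)
    (hb : ∀ i, b i ≠ 0) (hT : ∀ x i, J (T x) i = b i * J x (φ i)) (m : ℕ) (j : I) :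
    (T ^ m) (forwardVec φ b e m j) = e j := by
  rw [forwardVec, map_smul, pseudoShift_pow_apply_unitVec hJ he hφ hT, backVec_iterate hφ,
    inv_smul_smul₀ (Finset.prod_ne_zero_iff.mpr fun v _ => hb _)]

end PseudoShift

theorem stmt2_general
    {X : Type*} [NormedAddCommGroup X] [NormedSpace ℂ X]
    {I : Type*}
    (J : X →L[ℂ] (I → ℂ)) (hJ : Function.Injective J)
    (e : I → X) (he : ∀ i j : I, J (e i) j = if j = i then 1 else 0)
    (hdense : Dense (Submodule.span ℂ (Set.range e) : Set X))
    {N : ℕ}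
    (r : Fin N → ℕ)
    (b : Fin N → I → ℂ) (hb : ∀ l i, b l i ≠ 0)
    (φ : Fin N → I → I) (hφ : ∀ l, Function.Injective (φ l))
    (T : Fin N → X →L[ℂ] X)
    (hT : ∀ (l : Fin N) (x : X) (i : I), J (T l x) i = b l i * J x (φ l i))
    (n : ℕ → ℕ)
    (hcond : ∀ i : I,
      (∀ l : Fin N,
        Tendsto (fun k => ‖(∏ v ∈ Finset.range (r l * n k), b l ((φ l)^[v] i))⁻¹ •
            e ((φ l)^[r l * n k] i)‖) atTop (𝓝 0) ∧
        Tendsto (fun k => ‖backVec (φ l) (b l) e (r l * n k) i‖) atTop (𝓝 0)) ∧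
      (∀ s l : Fin N, s < l →
        Tendsto (fun k => ‖(∏ v ∈ Finset.range (r s * n k), b s ((φ s)^[v] i))⁻¹ •
            backVec (φ l) (b l) e (r l * n k) ((φ s)^[r s * n k] i)‖) atTop (𝓝 0) ∧
        Tendsto (fun k => ‖(∏ v ∈ Finset.range (r l * n k), b l ((φ l)^[v] i))⁻¹ •
            backVec (φ s) (b s) e (r s * n k) ((φ l)^[r l * n k] i)‖) atTop (𝓝 0))) :
    DHypCriterionWrt (fun l : Fin N => (T l) ^ (r l)) n := by
  have hTe : ∀ l m j, (T l ^ m) (e j) = backVec (φ l) (b l) e m j := fun l =>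
    pseudoShift_pow_apply_unitVec hJ he (hφ l) (hT l)
  refine dHypCriterionWrt_of_dense_span _ n e hdense
    (fun l k => forwardVec (φ l) (b l) e (r l * n k)) (fun l i => ?_) (fun l i => ?_)
    (fun s l i => ?_)
  · simp only [← pow_mul, hTe]
    exact tendsto_zero_iff_norm_tendsto_zero.mpr ((hcond i).1 l).2
  · exact tendsto_zero_iff_norm_tendsto_zero.mpr ((hcond i).1 l).1
  · simp only [← pow_mul]
    rcases lt_trichotomy s l with hsl | rfl | hls
    · simp only [hsl.ne, if_false, forwardVec, map_smul, hTe]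
      exact tendsto_zero_iff_norm_tendsto_zero.mpr ((hcond i).2 s l hsl).1
    · simp only [if_true, pseudoShift_pow_apply_forwardVec hJ he (hφ s) (hb s) (hT s)]
      exact tendsto_const_nhds
    · simp only [hls.ne', if_false, forwardVec, map_smul, hTe]
      exact tendsto_zero_iff_norm_tendsto_zero.mpr ((hcond i).2 l s hls).2

theorem stmt2
    {X : Type*} [NormedAddCommGroup X] [NormedSpace ℂ X] [CompleteSpace X]
    [TopologicalSpace.SeparableSpace X] (hinfdim : ¬ FiniteDimensional ℂ X)
    {I : Type*} [Countable I] [Infinite I]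
    (J : X →L[ℂ] (I → ℂ)) (hJ : Function.Injective J)
    (e : I → X) (he : ∀ i j : I, J (e i) j = if j = i then 1 else 0)
    (f : I → X →L[ℂ] ℂ) (hf : ∀ (i : I) (x : X), f i x = J x i)
    (hdense : Dense (Submodule.span ℂ (Set.range e) : Set X))
    (hOP : ∃ C : ℝ, ∀ i : I, ‖e i‖ * ‖f i‖ ≤ C)
    {N : ℕ} (hN : 2 ≤ N)
    (r : Fin N → ℕ) (hr1 : ∀ l, 1 ≤ r l) (hr : StrictMono r)
    (b : Fin N → I → ℂ) (hb : ∀ l i, b l i ≠ 0)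
    (φ : Fin N → I → I) (hφ : ∀ l, Function.Injective (φ l))
    (T : Fin N → X →L[ℂ] X)
    (hT : ∀ (l : Fin N) (x : X) (i : I), J (T l x) i = b l i * J x (φ l i))
    (n : ℕ → ℕ) (hn : StrictMono n) (hn1 : ∀ k, 1 ≤ n k)
    (hcond : ∀ i : I,
      (∀ l : Fin N,
        Tendsto (fun k => ‖(∏ v ∈ Finset.range (r l * n k), b l ((φ l)^[v] i))⁻¹ •
            e ((φ l)^[r l * n k] i)‖) atTop (𝓝 0) ∧
        Tendsto (fun k => ‖backVec (φ l) (b l) e (r l * n k) i‖) atTop (𝓝 0)) ∧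
      (∀ s l : Fin N, s < l →
        Tendsto (fun k => ‖(∏ v ∈ Finset.range (r s * n k), b s ((φ s)^[v] i))⁻¹ •
            backVec (φ l) (b l) e (r l * n k) ((φ s)^[r s * n k] i)‖) atTop (𝓝 0) ∧
        Tendsto (fun k => ‖(∏ v ∈ Finset.range (r l * n k), b l ((φ l)^[v] i))⁻¹ •
            backVec (φ s) (b s) e (r s * n k) ((φ l)^[r l * n k] i)‖) atTop (𝓝 0))) :
    DHypCriterionWrt (fun l : Fin N => (T l) ^ (r l)) n :=
  stmt2_general J hJ e he hdense r b hb φ hφ T hT n hcond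
end

section
/- Let X be a Banach sequence space over a countably infinite index set I in which the canonical unit vectors (e_i)_{i∈I} form an OP-basis, let φ : I → I be an injective map, let integers 1 ≤ r₁ < r₂ < ⋯ < r_N (N ≥ 2) be given, and for each 1 ≤ l ≤ N let T_l = T_{b^{(l)},φ} : X → X be a weighted pseudo-shift generated by φ with weight sequence b^{(l)} = (b_i^{(l)})_{i∈I} of nonzero scalars. If T₁^{r₁}, T₂^{r₂}, …, T_N^{r_N} have a dense set of d-supercyclic vectors, then the mapping φ has no periodic points. -/
set_option maxHeartbeats 1000000
open Filter Topology
open scoped Classical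

noncomputable def Complex.abs : AbsoluteValue ℂ ℝ := IsAbsoluteValue.toAbsoluteValue (norm : ℂ → ℝ)

theorem Complex.abs_ofReal (r : ℝ) : Complex.abs (r : ℂ) = |r| := by
  show ‖(r : ℂ)‖ = |r|
  exact Complex.norm_real r

theorem stmt6
    {X : Type*} [NormedAddCommGroup X] [NormedSpace ℂ X] [CompleteSpace X]
    [TopologicalSpace.SeparableSpace X] (hinfdim : ¬ FiniteDimensional ℂ X)
    {I : Type*} [Countable I] [Infinite I]
    (J : X →L[ℂ] (I → ℂ)) (hJ : Function.Injective J)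
    (e : I → X) (he : ∀ i j : I, J (e i) j = if j = i then 1 else 0)
    (f : I → X →L[ℂ] ℂ) (hf : ∀ (i : I) (x : X), f i x = J x i)
    (hdense : Dense (Submodule.span ℂ (Set.range e) : Set X))
    (hOP : ∃ C : ℝ, ∀ i : I, ‖e i‖ * ‖f i‖ ≤ C)
    (φ : I → I) (hφ : Function.Injective φ)
    {N : ℕ} (hN : 2 ≤ N)
    (r : Fin N → ℕ) (hr1 : ∀ l, 1 ≤ r l) (hr : StrictMono r)
    (b : Fin N → I → ℂ) (hb : ∀ l i, b l i ≠ 0)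
    (T : Fin N → X →L[ℂ] X)
    (hT : ∀ (l : Fin N) (x : X) (i : I), J (T l x) i = b l i * J x (φ i))
    (hdsc : Dense {x : X | Dense (Set.range fun p : ℂ × ℕ =>
        fun l : Fin N => p.1 • (((T l) ^ (r l * p.2)) x))}) :
    ∀ i : I, ∀ M : ℕ, 1 ≤ M → φ^[M] i ≠ i := by
  intro i M hM1 hMi
  -- the key power formula
  have key : ∀ (l : Fin N) (m : ℕ) (j : I) (x : X),
      J ((T l ^ m) x) j = (∏ k ∈ Finset.range m, b l (φ^[k] j)) * J x (φ^[m] j) := by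
    intro l m
    induction m with
    | zero => intro j x; simp
    | succ m ih =>
      intro j x
      have h1 : (T l ^ (m+1)) x = T l ((T l ^ m) x) := by rw [pow_succ']; rfl
      rw [h1, hT, ih (φ j) x, Finset.prod_range_succ']
      simp only [Function.iterate_succ_apply, Function.iterate_zero_apply]
      ring
  -- pick a d-supercyclic vector x
  haveI : Nonempty X := ⟨0⟩
  obtain ⟨x, hx⟩ := hdsc.nonempty
  simp only [Set.mem_setOf_eq] at hx
  -- indices l0 l1
  set l0 : Fin N := ⟨0, by omega⟩ with hl0
  set l1 : Fin N := ⟨1, by omega⟩ with hl1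
  -- periodic orbit facts
  have hit : ∀ m : ℕ, φ^[m] i = φ^[m % M] i := by
    intro m
    conv_lhs => rw [← Nat.mod_add_div m M]
    rw [Function.iterate_add_apply, Function.iterate_mul,
      Function.iterate_fixed hMi (m / M)]
  -- weight products
  set c : Fin N → ℕ → ℂ := fun l m => ∏ k ∈ Finset.range m, b l (φ^[k] i) with hcdef
  have hc0 : ∀ l m, c l m ≠ 0 := by
    intro l m
    exact Finset.prod_ne_zero_iff.2 fun k _ => hb l _
  have hcM : ∀ (l : Fin N) (t : ℕ), c l (M + t) = c l M * c l t := by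
    intro l t
    rw [hcdef]
    simp only
    rw [Finset.prod_range_add]
    congr 1
    refine Finset.prod_congr rfl fun k _ => ?_
    rw [Nat.add_comm M k, Function.iterate_add_apply, hMi]
  have hcq : ∀ (l : Fin N) (q s : ℕ), c l (M * q + s) = c l M ^ q * c l s := by
    intro l q s
    induction q with
    | zero => simp
    | succ q ih =>
      have : M * (q + 1) + s = M + (M * q + s) := by ring
      rw [this, hcM, ih, pow_succ]
      ring
  have hcm : ∀ (l : Fin N) (m : ℕ), c l m = c l M ^ (m / M) * c l (m % M) := by
    intro l m
    conv_lhs => rw [← Nat.div_add_mod m M]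
    exact hcq l (m / M) (m % M)
  -- coordinates of the orbit
  set u : ℕ → ℂ := fun m => J x (φ^[m] i) with hudef
  have hu : ∀ m, u m = u (m % M) := by
    intro m
    show J x (φ^[m] i) = J x (φ^[m % M] i)
    rw [hit m]
  set A : ℕ → ℂ := fun n => J ((T l0 ^ (r l0 * n)) x) i with hAdef
  set B : ℕ → ℂ := fun n => J ((T l1 ^ (r l1 * n)) x) i with hBdef
  have hA : ∀ n, A n = c l0 (r l0 * n) * u (r l0 * n) := fun n => key l0 _ i x
  have hB : ∀ n, B n = c l1 (r l1 * n) * u (r l1 * n) := fun n => key l1 _ i x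
  have hl01 : l0 ≠ l1 := by
    simp [hl0, hl1, Fin.ext_iff]
  -- density of the pair coordinates
  have hD : Dense (Set.range fun p : ℂ × ℕ => ((p.1 * A p.2, p.1 * B p.2) : ℂ × ℂ)) := by
    set Ψ : (Fin N → X) → ℂ × ℂ := fun g => (J (g l0) i, J (g l1) i) with hΨ
    have hcont : Continuous Ψ := by
      apply Continuous.prodMk
      · exact (continuous_apply i).comp (J.continuous.comp (continuous_apply l0))
      · exact (continuous_apply i).comp (J.continuous.comp (continuous_apply l1))
    have hsurj : Function.Surjective Ψ := by
      rintro ⟨a, d⟩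
      refine ⟨fun l => if l = l0 then a • e i else if l = l1 then d • e i else 0, ?_⟩
      simp [hΨ, hl01.symm, map_smul, he]
    have himg : (Set.range fun p : ℂ × ℕ => ((p.1 * A p.2, p.1 * B p.2) : ℂ × ℂ))
        = Ψ '' (Set.range fun p : ℂ × ℕ => fun l : Fin N => p.1 • (((T l) ^ (r l * p.2)) x)) := by
      rw [← Set.range_comp]
      apply congrArg
      funext p
      simp only [Function.comp, hΨ, map_smul]
      rfl
    rw [himg]
    rw [dense_iff_closure_eq]
    apply Set.eq_univ_of_univ_subset
    calc Set.univ = Ψ '' Set.univ := by rw [Set.image_univ, hsurj.range_eq]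
    _ = Ψ '' closure (Set.range fun p : ℂ × ℕ => fun l : Fin N => p.1 • (((T l) ^ (r l * p.2)) x)) := by
        rw [hx.closure_eq]
    _ ⊆ closure (Ψ '' _) := image_closure_subset_closure_image hcont
  -- approximation of positive reals by |B n / A n|
  have happrox : ∀ R : ℝ, 0 < R → ∀ ε : ℝ, 0 < ε →
      ∃ n, A n ≠ 0 ∧ B n ≠ 0 ∧ |Complex.abs (B n / A n) - R| < ε := by
    intro R hR ε hε
    set δ := min (1/2 : ℝ) (min ε R / (2 * (1 + R))) with hδdef
    have hδhalf : δ ≤ 1/2 := min_le_left _ _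
    have hδsmall : δ ≤ min ε R / (2 * (1 + R)) := min_le_right _ _
    have hδ0 : 0 < δ := by
      apply lt_min (by norm_num)
      have : 0 < min ε R := lt_min hε hR
      positivity
    obtain ⟨z, hz, hdist⟩ := hD.exists_dist_lt ((1 : ℂ), (R : ℂ)) hδ0
    obtain ⟨⟨lam, n⟩, rfl⟩ := hz
    rw [Prod.dist_eq, max_lt_iff] at hdist
    obtain ⟨h1, h2⟩ := hdist
    dsimp only at h1 h2
    rw [Complex.dist_eq] at h1 h2
    change Complex.abs _ < δ at h1 h2
    -- |lam * A n| ≥ 1 - δ ≥ 1/2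
    have hz1 : (1 : ℝ) - δ ≤ Complex.abs (lam * A n) := by
      have h := Complex.abs.add_le (1 - lam * A n) (lam * A n)
      simp only [sub_add_cancel, map_one] at h
      linarith
    have hz1' : (1 : ℝ)/2 ≤ Complex.abs (lam * A n) := by linarith
    have hAn : A n ≠ 0 := by
      intro h0
      rw [h0, mul_zero, map_zero] at hz1'
      linarith
    have hlam : lam ≠ 0 := by
      intro h0
      rw [h0, zero_mul, map_zero] at hz1'
      linarith
    -- main estimate
    have hkey : Complex.abs (B n / A n - R) < min ε R := by
      have he1 : B n / A n - (R : ℂ) = ((lam * B n - R) + R * (1 - lam * A n)) / (lam * A n) := by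
        field_simp
        ring
      rw [he1, map_div₀]
      have hnum : Complex.abs ((lam * B n - R) + R * (1 - lam * A n))
          ≤ Complex.abs (lam * B n - R) + R * Complex.abs (1 - lam * A n) := by
        refine (Complex.abs.add_le _ _).trans ?_
        rw [map_mul]
        gcongr
        rw [Complex.abs_ofReal, abs_of_pos hR]
      have hRd : Complex.abs (lam * B n - R) < δ := by
        rwa [← Complex.abs.map_neg, neg_sub]
      have hnum2 : Complex.abs ((lam * B n - R) + R * (1 - lam * A n)) < δ * (1 + R) := by
        nlinarith [Complex.abs.nonneg (1 - lam * A n), Complex.abs.nonneg (lam * B n - R)]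
      have hden : (0 : ℝ) < Complex.abs (lam * A n) := by linarith
      rw [div_lt_iff₀ hden]
      have h2δ : 2 * δ * (1 + R) ≤ min ε R := by
        rw [le_div_iff₀ (by positivity)] at hδsmall
        linarith
      have hmin0 : 0 < min ε R := lt_min hε hR
      nlinarith [mul_le_mul_of_nonneg_left hz1' hmin0.le]
    have hBn : B n ≠ 0 := by
      intro h0
      rw [h0, zero_div, zero_sub, Complex.abs.map_neg, Complex.abs_ofReal,
        abs_of_pos hR] at hkey
      have := min_le_right ε R
      linarith
    refine ⟨n, hAn, hBn, ?_⟩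
    have habs : |Complex.abs (B n / A n) - R| ≤ Complex.abs (B n / A n - R) := by
      have := Complex.abs.abs_abv_sub_le_abv_sub (B n / A n) ((R : ℂ))
      rwa [Complex.abs_ofReal, abs_of_pos hR] at this
    have := min_le_left ε R
    linarith
  -- logs and constants
  have hMR : (0:ℝ) < M := by exact_mod_cast hM1
  set L : Fin N → ℝ := fun l => Real.log (Complex.abs (c l M)) with hLdef
  set β : ℝ := ((r l1 : ℝ) * L l1 - (r l0 : ℝ) * L l0) / M with hβdef
  set g : ℕ → ℝ := fun s => |Real.log (Complex.abs (c l0 s))| +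
      |Real.log (Complex.abs (c l1 s))| + |Real.log (Complex.abs (u s))| with hgdef
  have hrange : (Finset.range M).Nonempty := ⟨0, Finset.mem_range.mpr (by omega)⟩
  set Cb : ℝ := max ((Finset.range M).sup' hrange g) 0 with hCbdef
  have hCb0 : 0 ≤ Cb := le_max_right _ _
  have hCb : ∀ s, s < M → g s ≤ Cb := by
    intro s hs
    exact le_trans (Finset.le_sup' g (Finset.mem_range.mpr hs)) (le_max_left _ _)
  set C : ℝ := |L l0| + |L l1| + 2 * Cb + 1 with hCdef
  have hC1 : 1 ≤ C := by
    have := abs_nonneg (L l0); have := abs_nonneg (L l1); linarith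
  -- log of weight product
  have hlogc : ∀ (l : Fin N) (m : ℕ), Real.log (Complex.abs (c l m))
      = ((m / M : ℕ) : ℝ) * L l + Real.log (Complex.abs (c l (m % M))) := by
    intro l m
    rw [hcm l m, map_mul, map_pow,
      Real.log_mul (pow_ne_zero _ (Complex.abs.ne_zero (hc0 l M))) (Complex.abs.ne_zero (hc0 l _)),
      Real.log_pow]
  -- floor error bound
  have hfloor : ∀ m : ℕ, |((m / M : ℕ) : ℝ) - (m : ℝ)/(M : ℝ)| ≤ 1 := by
    intro m
    have h1 : (M : ℝ) * ((m / M : ℕ) : ℝ) + ((m % M : ℕ) : ℝ) = m := by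
      exact_mod_cast Nat.div_add_mod m M
    have h2 : ((m % M : ℕ) : ℝ) < M := by
      exact_mod_cast Nat.mod_lt m (by omega)
    have h3 : (0:ℝ) ≤ ((m % M : ℕ) : ℝ) := Nat.cast_nonneg _
    have h4 : ((m / M : ℕ) : ℝ) - (m:ℝ)/M = -(((m % M : ℕ):ℝ)/M) := by
      field_simp
      linarith
    rw [h4, abs_neg, abs_div, abs_of_nonneg h3, abs_of_pos hMR, div_le_one hMR]
    linarith
  -- the main estimate
  have hest : ∀ n : ℕ, A n ≠ 0 → B n ≠ 0 →
      |Real.log (Complex.abs (B n / A n)) - (n:ℝ) * β| ≤ C := by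
    intro n hAn hBn
    set m0 : ℕ := r l0 * n with hm0def
    set m1 : ℕ := r l1 * n with hm1def
    have hu0 : u (m0 % M) ≠ 0 := by
      intro h
      apply hAn
      rw [hA n, hu m0, h, mul_zero]
    have hu1 : u (m1 % M) ≠ 0 := by
      intro h
      apply hBn
      rw [hB n, hu m1, h, mul_zero]
    have habsA : Real.log (Complex.abs (A n)) =
        ((m0 / M : ℕ) : ℝ) * L l0 + (Real.log (Complex.abs (c l0 (m0 % M)))
          + Real.log (Complex.abs (u (m0 % M)))) := by
      rw [hA n, hu m0, map_mul,
        Real.log_mul (Complex.abs.ne_zero (hc0 _ _)) (Complex.abs.ne_zero hu0), hlogc]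
      ring
    have habsB : Real.log (Complex.abs (B n)) =
        ((m1 / M : ℕ) : ℝ) * L l1 + (Real.log (Complex.abs (c l1 (m1 % M)))
          + Real.log (Complex.abs (u (m1 % M)))) := by
      rw [hB n, hu m1, map_mul,
        Real.log_mul (Complex.abs.ne_zero (hc0 _ _)) (Complex.abs.ne_zero hu1), hlogc]
      ring
    have hdiv : Real.log (Complex.abs (B n / A n))
        = Real.log (Complex.abs (B n)) - Real.log (Complex.abs (A n)) := by
      rw [map_div₀, Real.log_div (Complex.abs.ne_zero hBn) (Complex.abs.ne_zero hAn)]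
    set E0 : ℝ := Real.log (Complex.abs (c l0 (m0 % M))) + Real.log (Complex.abs (u (m0 % M))) with hE0def
    set E1 : ℝ := Real.log (Complex.abs (c l1 (m1 % M))) + Real.log (Complex.abs (u (m1 % M))) with hE1def
    have c0' : ((m0 : ℕ) : ℝ) = (r l0 : ℝ) * n := by rw [hm0def]; push_cast; ring
    have c1' : ((m1 : ℕ) : ℝ) = (r l1 : ℝ) * n := by rw [hm1def]; push_cast; ring
    have hid : Real.log (Complex.abs (B n / A n)) - (n:ℝ) * β
        = (((m1 / M : ℕ) : ℝ) - (m1:ℝ)/M) * L l1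
          - (((m0 / M : ℕ) : ℝ) - (m0:ℝ)/M) * L l0 + E1 - E0 := by
      rw [hdiv, habsA, habsB, hβdef, c0', c1']
      field_simp
      ring
    have e0 := hfloor m0
    have e1 := hfloor m1
    have hE0b : |E0| ≤ Cb := by
      have hg := hCb (m0 % M) (Nat.mod_lt _ (by omega))
      rw [hgdef] at hg
      refine (abs_add_le _ _).trans ?_
      have := abs_nonneg (Real.log (Complex.abs (c l1 (m0 % M))))
      simp only at hg
      linarith
    have hE1b : |E1| ≤ Cb := by
      have hg := hCb (m1 % M) (Nat.mod_lt _ (by omega))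
      rw [hgdef] at hg
      refine (abs_add_le _ _).trans ?_
      have := abs_nonneg (Real.log (Complex.abs (c l0 (m1 % M))))
      simp only at hg
      linarith
    have ht1 : |(((m1 / M : ℕ) : ℝ) - (m1:ℝ)/M) * L l1| ≤ |L l1| := by
      rw [abs_mul]
      exact mul_le_of_le_one_left (abs_nonneg _) e1
    have ht0 : |(((m0 / M : ℕ) : ℝ) - (m0:ℝ)/M) * L l0| ≤ |L l0| := by
      rw [abs_mul]
      exact mul_le_of_le_one_left (abs_nonneg _) e0
    rw [hid, hCdef]
    set t1 : ℝ := (((m1 / M : ℕ) : ℝ) - (m1:ℝ)/M) * L l1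
    set t0 : ℝ := (((m0 / M : ℕ) : ℝ) - (m0:ℝ)/M) * L l0
    rw [abs_le]
    constructor
    · linarith [neg_abs_le t1, neg_abs_le E1, le_abs_self t0, le_abs_self E0]
    · linarith [le_abs_self t1, le_abs_self E1, neg_abs_le t0, neg_abs_le E0]
  -- the final contradiction
  set K : ℕ := ⌈(3*C+1)/β⌉₊ with hKdef
  have hKb : ∀ n : ℕ, A n ≠ 0 → B n ≠ 0 →
      Real.log (Complex.abs (B n / A n)) ∈ Set.Ioo (2*C) (2*C+1) → n ≤ K := by
    intro n hAn hBn hmem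
    obtain ⟨hlo, hhi⟩ := hmem
    have h := hest n hAn hBn
    rw [abs_le] at h
    have hnβ1 : C < (n:ℝ) * β := by linarith
    have hnβ2 : (n:ℝ) * β < 3*C+1 := by linarith
    have hβ0 : 0 < β := by
      by_contra hle
      push_neg at hle
      nlinarith [mul_nonneg (Nat.cast_nonneg n : (0:ℝ) ≤ n) (neg_nonneg.mpr hle)]
    have hnK : (n:ℝ) ≤ (3*C+1)/β := by
      rw [le_div_iff₀ hβ0]
      linarith
    have : (n : ℝ) ≤ (K : ℝ) := hnK.trans (Nat.le_ceil _)
    exact_mod_cast this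
  set F : Set ℝ := (fun n : ℕ => Real.log (Complex.abs (B n / A n))) '' (Set.Iic K) with hFdef
  have hFfin : F.Finite := (Set.finite_Iic K).image _
  have hsub : Set.Ioo (2*C) (2*C+1) ⊆ F := by
    intro t ht
    obtain ⟨ht1, ht2⟩ := ht
    have htclosure : t ∈ closure F := by
      rw [Metric.mem_closure_iff]
      intro ε hε
      set ε' := min ε (min (t - 2*C) (2*C+1 - t)) with hε'def
      have hε'0 : 0 < ε' := lt_min hε (lt_min (by linarith) (by linarith))
      have hconta : ContinuousAt Real.log (Real.exp t) :=
        Real.continuousAt_log (ne_of_gt (Real.exp_pos t))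
      rw [Metric.continuousAt_iff] at hconta
      obtain ⟨δ, hδ0, hδ⟩ := hconta ε' hε'0
      obtain ⟨n, hAn, hBn, hclose⟩ := happrox (Real.exp t) (Real.exp_pos t)
        (min δ (Real.exp t)) (lt_min hδ0 (Real.exp_pos t))
      set y := Complex.abs (B n / A n) with hydef
      have hy : dist y (Real.exp t) < δ := by
        rw [Real.dist_eq]
        exact lt_of_lt_of_le hclose (min_le_left _ _)
      have hlog := hδ hy
      rw [Real.log_exp, Real.dist_eq] at hlog
      refine ⟨Real.log y, ?_, ?_⟩
      · have hmem : Real.log y ∈ Set.Ioo (2*C) (2*C+1) := by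
          constructor
          · have h3 : ε' ≤ t - 2*C := le_trans (min_le_right _ _) (min_le_left _ _)
            linarith [(abs_lt.mp hlog).1]
          · have h4 : ε' ≤ 2*C+1 - t := le_trans (min_le_right _ _) (min_le_right _ _)
            linarith [(abs_lt.mp hlog).2]
        rw [hFdef]
        exact ⟨n, Set.mem_Iic.mpr (hKb n hAn hBn hmem), rfl⟩
      · rw [Real.dist_eq, abs_sub_comm]
        exact lt_of_lt_of_le hlog (min_le_left _ _)
    rwa [hFfin.isClosed.closure_eq] at htclosure
  exact (Set.Ioo_infinite (by linarith : 2*C < 2*C+1)) (hFfin.subset hsub)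
end
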